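/- Let n ≥ 1, m ∈ ℝ, r ≥ 0, and let p : ℤⁿ → ℂ be a symbol of order m. Then p(D) is GH-r if and only if there exists a single fixed k ∈ ℝ such that for every polynomial-growth u : ℤⁿ → ℂ, the condition p·u ∈ H^k(𝕋ⁿ) implies u ∈ H^{k+m−r}(𝕋ⁿ). -/

import Mathlib

open scoped BigOperators

/-- `|ξ| = Σⱼ |ξⱼ|`. -/
noncomputable def l1norm {n : ℕ} (ξ : Fin n → ℤ) : ℝ := ∑ j, |(ξ j : ℝ)|

/-- `‖ξ‖² = Σⱼ ξⱼ²`. -/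
noncomputable def l2normSq {n : ℕ} (ξ : Fin n → ℤ) : ℝ := ∑ j, ((ξ j : ℝ)) ^ 2

/-- `u ∈ H^k(𝕋ⁿ)` in terms of its Fourier coefficients. -/
def InSobolev {n : ℕ} (k : ℝ) (u : (Fin n → ℤ) → ℂ) : Prop :=
  Summable fun ξ : Fin n → ℤ => (1 + l2normSq ξ) ^ k * ‖u ξ‖ ^ 2

/-- Polynomial growth of Fourier coefficients (a distribution on `𝕋ⁿ`). -/
def PolyGrowth {n : ℕ} (u : (Fin n → ℤ) → ℂ) : Prop :=
  ∃ C N : ℝ, 0 < C ∧ 0 < N ∧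
    ∀ ξ, ‖u ξ‖ ≤ C * (1 + Real.sqrt (l2normSq ξ)) ^ N

/-- Rapidly decreasing Fourier coefficients (a smooth function on `𝕋ⁿ`). -/
def RapidDecay {n : ℕ} (v : (Fin n → ℤ) → ℂ) : Prop :=
  ∀ N : ℝ, 0 < N → ∃ C : ℝ, 0 < C ∧
    ∀ ξ, ‖v ξ‖ ≤ C * (1 + Real.sqrt (l2normSq ξ)) ^ (-N)

/-- `p` is a symbol of order `m`. -/
def SymbolOrder {n : ℕ} (m : ℝ) (p : (Fin n → ℤ) → ℂ) : Prop :=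
  ∃ C : ℝ, 0 < C ∧ ∀ ξ, ‖p ξ‖ ≤ C * (1 + l2normSq ξ) ^ (m / 2)

/-- `p(D)` is globally hypoelliptic with loss of `r` derivatives (GH-`r`). -/
def GHr {n : ℕ} (m r : ℝ) (p : (Fin n → ℤ) → ℂ) : Prop :=
  ∀ (k : ℝ) (u : (Fin n → ℤ) → ℂ), PolyGrowth u →
    InSobolev k (fun ξ => p ξ * u ξ) → InSobolev (k + m - r) u

/-- `p(D)` is globally solvable with loss of `r` derivatives (GS-`r`). -/
def GSr {n : ℕ} (m r : ℝ) (p : (Fin n → ℤ) → ℂ) : Prop :=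
  ∀ (k : ℝ) (f : (Fin n → ℤ) → ℂ), InSobolev k f → (∀ ξ, p ξ = 0 → f ξ = 0) →
    ∃ u : (Fin n → ℤ) → ℂ, InSobolev (k + m - r) u ∧ ∀ ξ, p ξ * u ξ = f ξ

/-- `p(D)` is globally hypoelliptic (GH). -/
def GloballyHypoelliptic {n : ℕ} (p : (Fin n → ℤ) → ℂ) : Prop :=
  ∀ u : (Fin n → ℤ) → ℂ, PolyGrowth u →
    RapidDecay (fun ξ => p ξ * u ξ) → RapidDecay u

/-!
The Bessel potential `⟨D⟩^s`, multiplication of the Fourier coefficients by `(1 + ‖ξ‖²)^(s/2)`,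
maps distributions to distributions, commutes with every Fourier multiplier `p(D)` and is an
isomorphism `H^(k+s) → H^k`. Conjugating the single estimate at level `k` by `⟨D⟩^(k'-k)`
therefore gives the estimate at every level `k'`.
-/

open Real

lemma l2normSq_nonneg {n : ℕ} (ξ : Fin n → ℤ) : 0 ≤ l2normSq ξ :=
  Finset.sum_nonneg fun _ _ => sq_nonneg _

lemma one_add_l2normSq_pos {n : ℕ} (ξ : Fin n → ℤ) : 0 < 1 + l2normSq ξ := by
  linarith [l2normSq_nonneg ξ]

lemma one_add_sq_rpow_half_le {x : ℝ} (hx : 0 ≤ x) (s : ℝ) :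
    (1 + x ^ 2) ^ (s / 2) ≤ (1 + x) ^ |s| := by
  rcases le_or_gt 0 s with hs | hs
  · calc (1 + x ^ 2) ^ (s / 2) ≤ ((1 + x) ^ (2 : ℝ)) ^ (s / 2) := by
          gcongr
          rw [rpow_two]
          nlinarith
      _ = (1 + x) ^ |s| := by
          rw [← rpow_mul (by positivity), abs_of_nonneg hs]
          ring_nf
  · exact (rpow_le_one_of_one_le_of_nonpos (by nlinarith) (by linarith)).trans
      (one_le_rpow (by linarith) (abs_nonneg s))

noncomputable def besselPotential {n : ℕ} (s : ℝ) (u : (Fin n → ℤ) → ℂ) :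
    (Fin n → ℤ) → ℂ :=
  fun ξ => (((1 + l2normSq ξ) ^ (s / 2) : ℝ) : ℂ) * u ξ

section BesselPotential

variable {n : ℕ} {s : ℝ} {u : (Fin n → ℤ) → ℂ}

lemma norm_besselPotential (ξ : Fin n → ℤ) :
    ‖besselPotential s u ξ‖ = (1 + l2normSq ξ) ^ (s / 2) * ‖u ξ‖ := by
  rw [besselPotential, norm_mul, Complex.norm_real, Real.norm_eq_abs,
    abs_of_pos (rpow_pos_of_pos (one_add_l2normSq_pos ξ) _)]

lemma mul_besselPotential (p : (Fin n → ℤ) → ℂ) :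
    (fun ξ => p ξ * besselPotential s u ξ) = besselPotential s (fun ξ => p ξ * u ξ) := by
  funext ξ
  exact mul_left_comm _ _ _

lemma inSobolev_besselPotential_iff (k : ℝ) :
    InSobolev k (besselPotential s u) ↔ InSobolev (k + s) u := by
  refine summable_congr fun ξ => ?_
  have hpos := one_add_l2normSq_pos ξ
  rw [norm_besselPotential, mul_pow, ← rpow_natCast, ← rpow_mul hpos.le, ← mul_assoc,
    ← rpow_add hpos]
  norm_num

lemma PolyGrowth.besselPotential (hu : PolyGrowth u) :
    PolyGrowth (_root_.besselPotential s u) := by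
  obtain ⟨C, N, hC, hN, hCN⟩ := hu
  refine ⟨C, N + |s|, hC, by positivity, fun ξ => ?_⟩
  have hsqrt := sqrt_nonneg (l2normSq ξ)
  have hweight : (1 + l2normSq ξ) ^ (s / 2) ≤ (1 + √(l2normSq ξ)) ^ |s| := by
    simpa only [sq_sqrt (l2normSq_nonneg ξ)] using one_add_sq_rpow_half_le hsqrt s
  rw [norm_besselPotential]
  calc (1 + l2normSq ξ) ^ (s / 2) * ‖u ξ‖
      ≤ (1 + √(l2normSq ξ)) ^ |s| * (C * (1 + √(l2normSq ξ)) ^ N) :=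
        mul_le_mul hweight (hCN ξ) (norm_nonneg _) (by positivity)
    _ = C * (1 + √(l2normSq ξ)) ^ (N + |s|) := by
        rw [rpow_add (by linarith)]
        ring

end BesselPotential

theorem stmt_5_general {n : ℕ} (m r : ℝ)
    (p : (Fin n → ℤ) → ℂ) :
    GHr m r p ↔
      ∃ k : ℝ, ∀ u : (Fin n → ℤ) → ℂ, PolyGrowth u →
        InSobolev k (fun ξ => p ξ * u ξ) → InSobolev (k + m - r) u := by
  refine ⟨fun h => ⟨0, h 0⟩, ?_⟩
  rintro ⟨k, hk⟩ k' u hu hpu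
  have hshifted := hk (besselPotential (k' - k) u) hu.besselPotential (by
    rwa [mul_besselPotential, inSobolev_besselPotential_iff, add_sub_cancel])
  rw [inSobolev_besselPotential_iff] at hshifted
  convert hshifted using 2
  ring

theorem stmt_5 {n : ℕ} (hn : 1 ≤ n) (m r : ℝ) (hr : 0 ≤ r)
    (p : (Fin n → ℤ) → ℂ) (hp : SymbolOrder m p) :
    GHr m r p ↔
      ∃ k : ℝ, ∀ u : (Fin n → ℤ) → ℂ, PolyGrowth u →
        InSobolev k (fun ξ => p ξ * u ξ) → InSobolev (k + m - r) u :=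
  stmt_5_general m r p
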